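/- arXiv:1711.00994 — 2 statements merged into one kernel-verified Lean document; each statement's English description precedes it below -/
import Mathlib

section
/- Let p > 1, θ > 0, κ ∈ ℝ, C₀ > 0, R₁ > 1, and let η, ψ_R, ψ*_R, P(R) be as in the context, with p' = p/(p-1). There exist constants C > 0 and δ₀ ∈ (0,1), depending only on p, θ, κ, C₀, R₁ and η, with the following property: if δ ∈ (0,δ₀], T > R₁, and w : Ω × [0,T) → [0,∞) is measurable, integrable on P(R) for every R ∈ (0,T), and satisfies δ + ∬_{P(R)} w(x,t) ψ_R(x,t) dx dt ≤ C₀ R^{−θ/p'} (log R)^{κ/p'} ( ∬_{P(R)} w(x,t) ψ*_R(x,t) dx dt )^{1/p} for every R ∈ [R₁,T), then T ≤ C δ^{−1/θ} (log(δ^{-1}))^{κ/θ}. -/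
open MeasureTheory Real Set

noncomputable section

/-- The plane `ℝ²` with the Euclidean norm. -/
abbrev E2 := EuclideanSpace ℝ (Fin 2)

/-- The exterior domain `Ω = {x ∈ ℝ² : |x| > 1}`. -/
def Omega : Set E2 := {x : E2 | 1 < ‖x‖}

/-- `η` is of class `C²` on `[0,∞)`, equals `1` on `[0,1/2]`, is nonincreasing on `[1/2,1]`
and vanishes on `[1,∞)`. -/
def etaOK (η : ℝ → ℝ) : Prop :=
  ContDiffOn ℝ 2 η (Set.Ici 0) ∧
  (∀ s ∈ Set.Icc (0 : ℝ) (1 / 2), η s = 1) ∧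
  AntitoneOn η (Set.Icc (1 / 2 : ℝ) 1) ∧
  (∀ s : ℝ, 1 ≤ s → η s = 0)

/-- `η*(s) = 0` for `s < 1/2` and `η*(s) = η(s)` for `s ≥ 1/2`. -/
def etaStar (η : ℝ → ℝ) (s : ℝ) : ℝ := if s < 1 / 2 then 0 else η s

/-- `ψ_R(x,t) = [η(((|x|-1)² + t)/R)]^{2p'}` with `p' = p/(p-1)`. -/
def psi (η : ℝ → ℝ) (p R : ℝ) (x : E2) (t : ℝ) : ℝ :=
  η (((‖x‖ - 1) ^ 2 + t) / R) ^ (2 * (p / (p - 1)))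

/-- `ψ*_R(x,t) = [η*(((|x|-1)² + t)/R)]^{2p'}` with `p' = p/(p-1)`. -/
def psiStar (η : ℝ → ℝ) (p R : ℝ) (x : E2) (t : ℝ) : ℝ :=
  etaStar η (((‖x‖ - 1) ^ 2 + t) / R) ^ (2 * (p / (p - 1)))

/-- `P(R) = {(x,t) ∈ Ω × [0,∞) : (|x|-1)² + t ≤ R}`. -/
def Pset (R : ℝ) : Set (E2 × ℝ) :=
  {q : E2 × ℝ | q.1 ∈ Omega ∧ 0 ≤ q.2 ∧ (‖q.1‖ - 1) ^ 2 + q.2 ≤ R}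

/-- The Laplacian in the `x`-variables: the sum of the two second partial derivatives. -/
def lapx {F : Type*} [NormedAddCommGroup F] [NormedSpace ℝ F] (f : E2 → F) (x : E2) : F :=
  ∑ i : Fin 2, iteratedDeriv 2 (fun s : ℝ => f (x + s • EuclideanSpace.single i (1 : ℝ))) 0

/-!
Since `ψ*_R ≤ ψ_R`, Young's inequality `J^{1/p} A ≤ J / p + A^{p'} / p'` with `J = ∬ w ψ_R`
absorbs `J` and turns the criterion at one radius `R` into `δ ≤ C₀^{p'} R^{-θ} (log R)^κ`.
Taking `R` the midpoint of `[R₁, T)`, so that `T ≤ 2R`, it remains to invert this bound; in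
logarithms it reads `θ log R ≤ c + log δ⁻¹ + κ log log R`, and since `log` grows slower than any
power, `log log R` may be replaced by `log log δ⁻¹` at the cost of a constant.
-/

theorem exists_mul_log_le_mul_add {κ b : ℝ} (hκ : 0 ≤ κ) (hb : 0 < b) :
    ∃ c, ∀ u > 0, κ * log u ≤ b * u + c := by
  refine ⟨κ * (log κ - log b), fun u hu => ?_⟩
  rcases hκ.eq_or_lt with rfl | hκ
  · simp only [zero_mul, add_zero]; positivity
  -- `κ log u - b u` is maximal at `u = κ / b`
  have h := log_le_sub_one_of_pos (show 0 < b * u / κ by positivity)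
  rw [log_div (by positivity) hκ.ne', log_mul hb.ne' hu.ne'] at h
  have h' := mul_le_mul_of_nonneg_left h hκ.le
  rw [mul_sub, mul_sub, mul_div_cancel₀ _ hκ.ne'] at h'
  linarith

theorem exists_mul_le_add_add_mul_log {θ : ℝ} (hθ : 0 < θ) (κ c : ℝ) :
    ∃ K, ∀ u > 0, ∀ L ≥ 1, θ * u ≤ c + L + κ * log u → θ * u ≤ K + L + κ * log L := by
  rcases le_or_gt 0 κ with hκ | hκ
  · obtain ⟨c', hc'⟩ := exists_mul_log_le_mul_add hκ (half_pos hθ)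
    set M := 2 / θ * (|c + c'| + 1)
    refine ⟨c + κ * log M, fun u hu L hL h => ?_⟩
    have huM : u ≤ M * L := by
      have hcc : c + c' ≤ |c + c'| * L :=
        (le_abs_self _).trans (le_mul_of_one_le_right (abs_nonneg _) hL)
      have : θ / 2 * u ≤ (|c + c'| + 1) * L := by linarith [hc' u hu]
      calc u = 2 / θ * (θ / 2 * u) := by field_simp
        _ ≤ 2 / θ * ((|c + c'| + 1) * L) := by gcongr
        _ = M * L := by ring
    have hlog : log u ≤ log M + log L := by
      rw [← log_mul (by positivity) (by positivity)]
      exact log_le_log hu huM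
    linarith [mul_le_mul_of_nonneg_left hlog hκ]
  · obtain ⟨c', hc'⟩ := exists_mul_log_le_mul_add (neg_nonneg.2 hκ.le) one_half_pos
    refine ⟨max (c - κ * log (2 * θ)) c', fun u hu L hL h => ?_⟩
    have hL0 : 0 < L := by linarith
    rcases le_or_gt L (2 * θ * u) with hLu | hLu
    · have hlog : log L ≤ log (2 * θ) + log u := by
        rw [← log_mul (by positivity) hu.ne']
        exact log_le_log hL0 hLu
      linarith [mul_le_mul_of_nonpos_left hlog hκ.le, le_max_left (c - κ * log (2 * θ)) c']
    · -- `θ u < L / 2` is already below `c' + L + κ log L`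
      linarith [le_max_right (c - κ * log (2 * θ)) c', hc' L hL0]

theorem le_rpow_of_add_le_mul_rpow {p A J J' δ : ℝ} (hp : 1 < p) (hA : 0 ≤ A) (hJ' : 0 ≤ J')
    (hJ'J : J' ≤ J) (h : δ + J ≤ A * J' ^ (1 / p)) : δ ≤ A ^ (p / (p - 1)) := by
  have hpq : p.HolderConjugate (p / (p - 1)) := .conjExponent hp
  have hJ : 0 ≤ J := hJ'.trans hJ'J
  have hyoung := young_inequality_of_nonneg (rpow_nonneg hJ (1 / p)) hA hpq
  rw [← rpow_mul hJ, one_div_mul_cancel hpq.ne_zero, rpow_one] at hyoung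
  have hJp : J / p ≤ J := div_le_self hJ hp.le
  have hAq : A ^ (p / (p - 1)) / (p / (p - 1)) ≤ A ^ (p / (p - 1)) :=
    div_le_self (rpow_nonneg hA _) hpq.symm.lt.le
  have hmono : A * J' ^ (1 / p) ≤ J ^ (1 / p) * A := by
    rw [mul_comm]; gcongr
  linarith

theorem log_rpow_mul_rpow_mul_log_rpow {q θ κ C₀ R : ℝ} (hq : 0 < q) (hC₀ : 0 < C₀)
    (hR : 1 < R) :
    log ((C₀ * R ^ (-(θ / q)) * log R ^ (κ / q)) ^ q)
      = q * log C₀ - θ * log R + κ * log (log R) := by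
  have hlogR : 0 < log R := log_pos hR
  rw [log_rpow (by positivity), log_mul (by positivity) (by positivity),
    log_mul hC₀.ne' (by positivity), log_rpow (by positivity), log_rpow hlogR]
  field_simp
  ring

theorem le_exp_mul_rpow_mul_log_rpow {θ κ K δ R : ℝ} (hθ : 0 < θ) (hδ : 0 < δ)
    (hL : 0 < log δ⁻¹) (hR : 0 < R) (h : θ * log R ≤ K + log δ⁻¹ + κ * log (log δ⁻¹)) :
    R ≤ exp (K / θ) * δ ^ (-(1 / θ)) * log δ⁻¹ ^ (κ / θ) := by
  set L := log δ⁻¹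
  have hlogδ : log δ = -L := by simp [L, log_inv]
  rw [rpow_def_of_pos hδ, rpow_def_of_pos hL, ← exp_add, ← exp_add, ← exp_log hR, exp_le_exp,
    hlogδ]
  rw [← le_div_iff₀' hθ] at h
  calc log R ≤ (K + L + κ * log L) / θ := h
    _ = K / θ + -L * -(1 / θ) + log L * (κ / θ) := by ring

theorem etaOK.nonneg {η : ℝ → ℝ} (hη : etaOK η) {s : ℝ} (hs : 0 ≤ s) : 0 ≤ η s := by
  obtain ⟨-, h_one, h_anti, h_zero⟩ := hη
  rcases le_or_gt s (1 / 2) with hs₁ | hs₁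
  · rw [h_one s ⟨hs, hs₁⟩]; norm_num
  rcases le_or_gt s 1 with hs₂ | hs₂
  · rw [← h_zero 1 le_rfl]
    exact h_anti ⟨hs₁.le, hs₂⟩ ⟨by norm_num, le_rfl⟩ hs₂
  · rw [h_zero s hs₂.le]

theorem etaOK.le_one {η : ℝ → ℝ} (hη : etaOK η) {s : ℝ} (hs : 0 ≤ s) : η s ≤ 1 := by
  obtain ⟨-, h_one, h_anti, h_zero⟩ := hη
  rcases le_or_gt s (1 / 2) with hs₁ | hs₁
  · rw [h_one s ⟨hs, hs₁⟩]
  rcases le_or_gt s 1 with hs₂ | hs₂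
  · rw [← h_one (1 / 2) ⟨by norm_num, le_rfl⟩]
    exact h_anti ⟨le_rfl, by norm_num⟩ ⟨hs₁.le, hs₂⟩ hs₁.le
  · rw [h_zero s hs₂.le]; norm_num

theorem etaOK.etaStar_nonneg {η : ℝ → ℝ} (hη : etaOK η) {s : ℝ} (hs : 0 ≤ s) :
    0 ≤ etaStar η s := by
  unfold etaStar
  split_ifs
  exacts [le_rfl, hη.nonneg hs]

theorem etaOK.etaStar_le {η : ℝ → ℝ} (hη : etaOK η) {s : ℝ} (hs : 0 ≤ s) :
    etaStar η s ≤ η s := by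
  unfold etaStar
  split_ifs
  exacts [hη.nonneg hs, le_rfl]

theorem measurableSet_Pset (R : ℝ) : MeasurableSet (Pset R) := by
  have hnorm : Continuous fun q : E2 × ℝ => ‖q.1‖ := continuous_fst.norm
  exact (measurableSet_lt measurable_const hnorm.measurable).inter
    ((measurableSet_le measurable_const measurable_snd).inter
      (measurableSet_le (((hnorm.sub continuous_const).pow 2).add continuous_snd).measurable
        measurable_const))

section Cutoff

variable {η : ℝ → ℝ} {p R : ℝ} {q : E2 × ℝ}

theorem div_nonneg_of_mem_Pset (hR : 0 < R) (hq : q ∈ Pset R) :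
    0 ≤ ((‖q.1‖ - 1) ^ 2 + q.2) / R :=
  div_nonneg (add_nonneg (sq_nonneg _) hq.2.1) hR.le

theorem two_mul_div_sub_one_nonneg (hp : 1 ≤ p) : 0 ≤ 2 * (p / (p - 1)) := by
  have : 0 ≤ p - 1 := by linarith
  positivity

theorem etaOK.psi_nonneg (hη : etaOK η) (hR : 0 < R) (hq : q ∈ Pset R) :
    0 ≤ psi η p R q.1 q.2 :=
  rpow_nonneg (hη.nonneg (div_nonneg_of_mem_Pset hR hq)) _

theorem etaOK.psi_le_one (hη : etaOK η) (hp : 1 ≤ p) (hR : 0 < R) (hq : q ∈ Pset R) :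
    psi η p R q.1 q.2 ≤ 1 :=
  rpow_le_one (hη.nonneg (div_nonneg_of_mem_Pset hR hq))
    (hη.le_one (div_nonneg_of_mem_Pset hR hq)) (two_mul_div_sub_one_nonneg hp)

theorem etaOK.psiStar_nonneg (hη : etaOK η) (hR : 0 < R) (hq : q ∈ Pset R) :
    0 ≤ psiStar η p R q.1 q.2 :=
  rpow_nonneg (hη.etaStar_nonneg (div_nonneg_of_mem_Pset hR hq)) _

theorem etaOK.psiStar_le_psi (hη : etaOK η) (hp : 1 ≤ p) (hR : 0 < R) (hq : q ∈ Pset R) :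
    psiStar η p R q.1 q.2 ≤ psi η p R q.1 q.2 :=
  rpow_le_rpow (hη.etaStar_nonneg (div_nonneg_of_mem_Pset hR hq))
    (hη.etaStar_le (div_nonneg_of_mem_Pset hR hq)) (two_mul_div_sub_one_nonneg hp)

theorem etaOK.continuousOn_psi (hη : etaOK η) (hp : 1 ≤ p) (hR : 0 < R) :
    ContinuousOn (fun q : E2 × ℝ => psi η p R q.1 q.2) (Pset R) := by
  have hs : Continuous fun q : E2 × ℝ => ((‖q.1‖ - 1) ^ 2 + q.2) / R := by fun_prop
  exact (hη.1.continuousOn.comp hs.continuousOn fun q hq => div_nonneg_of_mem_Pset hR hq).rpow_const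
    fun _ _ => Or.inr (two_mul_div_sub_one_nonneg hp)

theorem etaOK.integrableOn_mul_psi (hη : etaOK η) (hp : 1 ≤ p) (hR : 0 < R) {w : E2 × ℝ → ℝ}
    (hw : IntegrableOn w (Pset R)) :
    IntegrableOn (fun q => w q * psi η p R q.1 q.2) (Pset R) :=
  hw.mul_bdd ((hη.continuousOn_psi hp hR).aestronglyMeasurable (measurableSet_Pset R))
    ((ae_restrict_iff' (measurableSet_Pset R)).2 (ae_of_all _ fun q hq => by
      rw [norm_of_nonneg (hη.psi_nonneg hR hq)]; exact hη.psi_le_one hp hR hq))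

theorem etaOK.setIntegral_mul_psiStar_le (hη : etaOK η) (hp : 1 ≤ p) (hR : 0 < R)
    {w : E2 × ℝ → ℝ} (hw₀ : ∀ q ∈ Pset R, 0 ≤ w q) (hw : IntegrableOn w (Pset R)) :
    ∫ q in Pset R, w q * psiStar η p R q.1 q.2 ≤ ∫ q in Pset R, w q * psi η p R q.1 q.2 :=
  setIntegral_mono_of_nonneg (fun q hq => mul_nonneg (hw₀ q hq) (hη.psiStar_nonneg hR hq))
    (fun q hq => mul_le_mul_of_nonneg_left (hη.psiStar_le_psi hp hR hq) (hw₀ q hq))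
    (hη.integrableOn_mul_psi hp hR hw)

end Cutoff

/-- Key lemma, case `θ > 0`: under the criterion
`δ + ∬_{P(R)} w ψ_R ≤ C₀ R^{−θ/p'} (log R)^{κ/p'} (∬_{P(R)} w ψ*_R)^{1/p}` for all
`R ∈ [R₁,T)`, one gets `T ≤ C δ^{−1/θ} (log δ⁻¹)^{κ/θ}`. -/
theorem statement9 (p θ κ C₀ R₁ : ℝ) (hp : 1 < p) (hθ : 0 < θ) (hC₀ : 0 < C₀)
    (hR₁ : 1 < R₁) (η : ℝ → ℝ) (hη : etaOK η) :
    ∃ C > (0 : ℝ), ∃ δ₀ ∈ Set.Ioo (0 : ℝ) 1,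
      ∀ δ : ℝ, 0 < δ → δ ≤ δ₀ → ∀ T : ℝ, R₁ < T →
      ∀ w : E2 → ℝ → ℝ,
        Measurable (fun q : E2 × ℝ => w q.1 q.2) →
        (∀ x : E2, ∀ t : ℝ, x ∈ Omega → 0 ≤ t → t < T → 0 ≤ w x t) →
        (∀ R ∈ Set.Ioo (0 : ℝ) T,
          IntegrableOn (fun q : E2 × ℝ => w q.1 q.2) (Pset R)) →
        (∀ R : ℝ, R₁ ≤ R → R < T →
          δ + ∫ q in Pset R, w q.1 q.2 * psi η p R q.1 q.2
            ≤ C₀ * R ^ (-(θ / (p / (p - 1)))) * Real.log R ^ (κ / (p / (p - 1))) *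
              (∫ q in Pset R, w q.1 q.2 * psiStar η p R q.1 q.2) ^ (1 / p)) →
        T ≤ C * δ ^ (-(1 / θ)) * Real.log δ⁻¹ ^ (κ / θ) := by
  have hq : 0 < p / (p - 1) := div_pos (by linarith) (by linarith)
  obtain ⟨K, hK⟩ := exists_mul_le_add_add_mul_log hθ κ (p / (p - 1) * log C₀)
  refine ⟨2 * exp (K / θ), by positivity, exp (-1), ⟨exp_pos _, exp_lt_one_iff.2 (by norm_num)⟩, ?_⟩
  intro δ hδ hδ₀ T hT w _ hw₀ hw hcrit
  obtain ⟨R, hR₁R, hRT, hTR⟩ : ∃ R, R₁ ≤ R ∧ R < T ∧ T ≤ 2 * R :=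
    ⟨(R₁ + T) / 2, by linarith, by linarith, by linarith⟩
  have hR : 1 < R := by linarith
  have hw₀R : ∀ q ∈ Pset R, 0 ≤ w q.1 q.2 := fun q hq =>
    hw₀ q.1 q.2 hq.1 hq.2.1 (by nlinarith [hq.2.2, sq_nonneg (‖q.1‖ - 1)])
  have hδR : δ ≤ (C₀ * R ^ (-(θ / (p / (p - 1)))) * log R ^ (κ / (p / (p - 1)))) ^ (p / (p - 1)) :=
    le_rpow_of_add_le_mul_rpow hp (by have := log_pos hR; positivity)
      (setIntegral_nonneg (measurableSet_Pset R) fun q hq =>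
        mul_nonneg (hw₀R q hq) (hη.psiStar_nonneg (by linarith) hq))
      (hη.setIntegral_mul_psiStar_le hp.le (by linarith) hw₀R (hw R ⟨by linarith, hRT⟩))
      (hcrit R hR₁R hRT)
  have hL : 1 ≤ log δ⁻¹ := by
    rw [le_log_iff_exp_le (by positivity), ← inv_inv (exp 1), ← exp_neg]
    exact inv_anti₀ hδ hδ₀
  have hlogR : θ * log R ≤ p / (p - 1) * log C₀ + log δ⁻¹ + κ * log (log R) := by
    have := log_le_log hδ hδR
    rw [log_rpow_mul_rpow_mul_log_rpow hq hC₀ hR] at this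
    rw [log_inv]
    linarith
  calc T ≤ 2 * R := hTR
    _ ≤ 2 * (exp (K / θ) * δ ^ (-(1 / θ)) * log δ⁻¹ ^ (κ / θ)) := by
      gcongr
      exact le_exp_mul_rpow_mul_log_rpow hθ hδ (by linarith) (by linarith)
        (hK _ (log_pos hR) _ hL hlogR)
    _ = 2 * exp (K / θ) * δ ^ (-(1 / θ)) * log δ⁻¹ ^ (κ / θ) := by ring
end
end

section
/- Let p > 1, τ ∈ {0,1}, ζ ∈ [−π/2, π/2], R₀ > 0, let η, ψ_R, ψ*_R, P(R) be as in the context, and set Φ(x) = log|x| for x ∈ Ω. There exists a constant C₅ > 0, depending only on η, p, τ and R₀, such that for every R ≥ R₀ and every (x,t) ∈ P(R), | −Δ_x(Φ ψ_R)(x,t) + τ ∂_t²(Φ ψ_R)(x,t) − e^{iζ} ∂_t(Φ ψ_R)(x,t) | ≤ C₅ R^{-1} Φ(x) [ψ*_R(x,t)]^{1/p}, where | · | is the modulus of a complex number, Δ_x is the Laplacian in the x-variables, and ∂_t, ∂_t² are the first and second t-derivatives. -/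
open MeasureTheory Real Set

noncomputable section

/-!
Write `m = 2p'` and `g = η ^ m`, so that `Φ ψ_R = log |x| · g(s_R)`. Since `log` is harmonic in
the plane, the radial form of the Laplacian gives `Δ(log r · G) = log r · (G'' + G'/r) + 2 G'/r`
for `G(r) = g(s_R)`. Every term then carries `g'(s_R)` or `g''(s_R)`: these vanish for `s_R < 1/2`
and are `O(η^(m-2))` on `[1/2, 1]`, and `η^(m-2) = (ψ*_R)^(1/p)` because `m - 2 = m/p`. The chain
rule factors `2(r-1)/R` are controlled by `(r-1)² ≤ R` and `(r-1)/r ≤ log r`, and the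
`t`-derivatives only contribute the factors `R⁻¹` and `R⁻² ≤ (R₀ R)⁻¹`.
-/

open Filter Topology InnerProductSpace

theorem HasDerivAt.norm {F : Type*} [NormedAddCommGroup F] [InnerProductSpace ℝ F]
    {f : ℝ → F} {f' : F} {s : ℝ} (hf : HasDerivAt f f' s) (h0 : f s ≠ 0) :
    HasDerivAt (fun y => ‖f y‖) (⟪f s, f'⟫_ℝ / ‖f s‖) s := by
  have h := hf.norm_sq.sqrt (by positivity)
  simp only [Real.sqrt_sq (norm_nonneg _)] at h
  convert h using 1
  field_simp

theorem ContDiffOn.hasDerivAt_deriv {g : ℝ → ℝ} {U : Set ℝ} (hg : ContDiffOn ℝ 2 g U)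
    (hU : IsOpen U) {σ : ℝ} (hσ : σ ∈ U) : HasDerivAt g (deriv g σ) σ :=
  ((hg.differentiableOn (by norm_num)).differentiableAt (hU.mem_nhds hσ)).hasDerivAt

theorem ContDiffOn.hasDerivAt_deriv_deriv {g : ℝ → ℝ} {U : Set ℝ} (hg : ContDiffOn ℝ 2 g U)
    (hU : IsOpen U) {σ : ℝ} (hσ : σ ∈ U) : HasDerivAt (deriv g) (deriv (deriv g) σ) σ :=
  (((hg.deriv_of_isOpen hU (by norm_num : (1 : WithTop ℕ∞) + 1 ≤ 2)).differentiableOn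
    one_ne_zero).differentiableAt (hU.mem_nhds hσ)).hasDerivAt

section RpowDeriv

variable {f : ℝ → ℝ} {U : Set ℝ} {m σ : ℝ}

theorem deriv_rpow_const_of_contDiffOn (hf : ContDiffOn ℝ 2 f U) (hU : IsOpen U) (hm : 1 ≤ m)
    (hσ : σ ∈ U) : deriv (fun y => f y ^ m) σ = deriv f σ * m * f σ ^ (m - 1) :=
  ((hf.hasDerivAt_deriv hU hσ).rpow_const (Or.inr hm)).deriv

theorem deriv_deriv_rpow_const_of_contDiffOn (hf : ContDiffOn ℝ 2 f U) (hU : IsOpen U)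
    (hm : 2 ≤ m) (hσ : σ ∈ U) :
    deriv (deriv fun y => f y ^ m) σ = deriv (deriv f) σ * m * f σ ^ (m - 1)
      + deriv f σ * m * (deriv f σ * (m - 1) * f σ ^ (m - 2)) := by
  have hfirst : deriv (fun y => f y ^ m) =ᶠ[𝓝 σ] fun y => deriv f y * m * f y ^ (m - 1) := by
    filter_upwards [hU.mem_nhds hσ] with y hy
    exact deriv_rpow_const_of_contDiffOn hf hU (by linarith) hy
  rw [hfirst.deriv_eq, show m - 2 = m - 1 - 1 by ring]
  exact (((hf.hasDerivAt_deriv_deriv hU hσ).mul_const m).mul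
    ((hf.hasDerivAt_deriv hU hσ).rpow_const (Or.inr (by linarith)))).deriv

end RpowDeriv

theorem abs_deriv_rpow_le {e d₁ d₂ M₁ M₂ m : ℝ} (he : e ∈ Icc 0 1) (hm : 2 ≤ m)
    (hd₁ : |d₁| ≤ M₁) (hd₂ : |d₂| ≤ M₂) :
    |d₁ * m * e ^ (m - 1)| ≤ m * M₁ * e ^ (m - 2) ∧
      |d₂ * m * e ^ (m - 1) + d₁ * m * (d₁ * (m - 1) * e ^ (m - 2))|
        ≤ m * (M₂ + (m - 1) * M₁ ^ 2) * e ^ (m - 2) := by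
  have hpow : e ^ (m - 1) ≤ e ^ (m - 2) :=
    Real.rpow_le_rpow_of_exponent_ge' he.1 he.2 (by linarith) (by linarith)
  have he₁ : 0 ≤ e ^ (m - 1) := Real.rpow_nonneg he.1 _
  have he₂ : 0 ≤ e ^ (m - 2) := Real.rpow_nonneg he.1 _
  have hsq : d₁ ^ 2 ≤ M₁ ^ 2 := sq_le_sq' (abs_le.mp hd₁).1 (abs_le.mp hd₁).2
  have hM₁ : 0 ≤ M₁ := (abs_nonneg _).trans hd₁
  have hm₀ : 0 ≤ m := by linarith
  have hm₁ : 0 ≤ m - 1 := by linarith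
  have habs : ∀ d : ℝ, |d * m * e ^ (m - 1)| = |d| * m * e ^ (m - 1) := fun d => by
    rw [abs_mul, abs_mul, abs_of_nonneg he₁, abs_of_nonneg hm₀]
  constructor
  · calc |d₁ * m * e ^ (m - 1)| ≤ M₁ * m * e ^ (m - 2) := by rw [habs]; gcongr
      _ = m * M₁ * e ^ (m - 2) := by ring
  · calc _ ≤ |d₂ * m * e ^ (m - 1)| + |d₁ * m * (d₁ * (m - 1) * e ^ (m - 2))| := abs_add_le _ _
      _ = |d₂| * m * e ^ (m - 1) + m * (m - 1) * d₁ ^ 2 * e ^ (m - 2) := by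
        rw [habs, show d₁ * m * (d₁ * (m - 1) * e ^ (m - 2)) = m * (m - 1) * d₁ ^ 2 * e ^ (m - 2)
          by ring, abs_of_nonneg (a := m * (m - 1) * d₁ ^ 2 * e ^ (m - 2)) (by positivity)]
      _ ≤ M₂ * m * e ^ (m - 2) + m * (m - 1) * M₁ ^ 2 * e ^ (m - 2) := by
        gcongr
        exact mul_nonneg ((abs_nonneg _).trans hd₂) hm₀
      _ = m * (M₂ + (m - 1) * M₁ ^ 2) * e ^ (m - 2) := by ring

section RadialLaplacian

variable {F F' : ℝ → ℝ} {F'' : ℝ}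

theorem iteratedDeriv_two_comp_norm_add_smul {E : Type*} [NormedAddCommGroup E]
    [InnerProductSpace ℝ E] {x : E} (hx : x ≠ 0) (v : E)
    (hF : ∀ᶠ ρ in 𝓝 ‖x‖, HasDerivAt F (F' ρ) ρ) (hF' : HasDerivAt F' F'' ‖x‖) :
    iteratedDeriv 2 (fun s : ℝ => F ‖x + s • v‖) 0 =
      F'' * (⟪x, v⟫_ℝ / ‖x‖) ^ 2 + F' ‖x‖ * (‖v‖ ^ 2 - (⟪x, v⟫_ℝ / ‖x‖) ^ 2) / ‖x‖ := by
  set ℓ : ℝ → E := fun s => x + s • v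
  have hℓ : ∀ s, HasDerivAt ℓ v s := fun s =>
    (((hasDerivAt_id s).smul_const v).const_add x).congr_deriv (one_smul ℝ v)
  have hℓ0 : ℓ 0 = x := by simp [ℓ]
  have hcont : ContinuousAt (fun s => ‖ℓ s‖) 0 := by fun_prop
  have hnear : ∀ᶠ s in 𝓝 (0 : ℝ), ℓ s ≠ 0 ∧ HasDerivAt F (F' ‖ℓ s‖) ‖ℓ s‖ := by
    have hpos : ∀ᶠ s in 𝓝 (0 : ℝ), 0 < ‖ℓ s‖ :=
      hcont.eventually (lt_mem_nhds (by simpa [hℓ0] using hx))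
    filter_upwards [hpos, hcont.eventually (by simpa [hℓ0] using hF)] with s hs hFs
    exact ⟨norm_pos_iff.mp hs, hFs⟩
  have hderiv : deriv (fun s => F ‖ℓ s‖) =ᶠ[𝓝 0]
      fun s => F' ‖ℓ s‖ * (⟪ℓ s, v⟫_ℝ / ‖ℓ s‖) := by
    filter_upwards [hnear] with s ⟨hs, hFs⟩
    exact (hFs.comp s ((hℓ s).norm hs)).deriv
  have hinner : HasDerivAt (fun s => ⟪ℓ s, v⟫_ℝ) ⟪v, v⟫_ℝ 0 := by
    simpa using (hℓ 0).inner ℝ (hasDerivAt_const 0 v)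
  have hsecond := ((hF'.comp_of_eq 0 ((hℓ 0).norm (by rwa [hℓ0])) (by rw [hℓ0])).mul
    (hinner.div ((hℓ 0).norm (by rwa [hℓ0])) (by simpa [hℓ0] using hx)))
  rw [iteratedDeriv_succ, iteratedDeriv_one, hderiv.deriv_eq]
  change deriv ((F' ∘ fun s => ‖ℓ s‖) * ((fun s => ⟪ℓ s, v⟫_ℝ) / fun s => ‖ℓ s‖)) 0 = _
  rw [hsecond.deriv]
  simp only [Pi.div_apply, Function.comp_apply, hℓ0, real_inner_self_eq_norm_sq]
  have : ‖x‖ ≠ 0 := norm_ne_zero_iff.mpr hx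
  field_simp

theorem lapx_comp_norm {x : E2} (hx : x ≠ 0)
    (hF : ∀ᶠ ρ in 𝓝 ‖x‖, HasDerivAt F (F' ρ) ρ) (hF' : HasDerivAt F' F'' ‖x‖) :
    lapx (fun y => F ‖y‖) x = F'' + F' ‖x‖ / ‖x‖ := by
  have hsum : x 0 ^ 2 + x 1 ^ 2 = ‖x‖ ^ 2 := by
    simp [EuclideanSpace.real_norm_sq_eq, Fin.sum_univ_two]
  have : ‖x‖ ≠ 0 := norm_ne_zero_iff.mpr hx
  simp only [lapx, Fin.sum_univ_two, iteratedDeriv_two_comp_norm_add_smul hx _ hF hF',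
    EuclideanSpace.inner_single_right, PiLp.norm_single, norm_one, one_mul, conj_trivial]
  field_simp
  linear_combination (F'' * ‖x‖ - F' ‖x‖) * hsum

end RadialLaplacian

theorem lapx_log_mul_comp_norm {G G' : ℝ → ℝ} {G'' : ℝ} {x : E2} (hx : x ≠ 0)
    (hG : ∀ᶠ ρ in 𝓝 ‖x‖, HasDerivAt G (G' ρ) ρ) (hG' : HasDerivAt G' G'' ‖x‖) :
    lapx (fun y => Real.log ‖y‖ * G ‖y‖) x =
      Real.log ‖x‖ * (G'' + G' ‖x‖ / ‖x‖) + 2 * G' ‖x‖ / ‖x‖ := by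
  have hx' : 0 < ‖x‖ := norm_pos_iff.mpr hx
  have hF : ∀ᶠ ρ in 𝓝 ‖x‖, HasDerivAt (fun ρ => Real.log ρ * G ρ)
      (ρ⁻¹ * G ρ + Real.log ρ * G' ρ) ρ := by
    filter_upwards [hG, lt_mem_nhds hx'] with ρ hGρ hρ
    exact (Real.hasDerivAt_log hρ.ne').mul hGρ
  have hF' := ((hasDerivAt_inv hx'.ne').mul (hG.self_of_nhds)).add
    ((Real.hasDerivAt_log hx'.ne').mul hG')
  rw [lapx_comp_norm hx hF hF']
  field_simp
  ring

/-- The variable `s_R(x,t)` of the cut-off, as a function of `ρ = |x|` and `t`. -/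
def sR (R ρ t : ℝ) : ℝ := ((ρ - 1) ^ 2 + t) / R

theorem hasDerivAt_sR (R ρ t : ℝ) : HasDerivAt (fun ρ => sR R ρ t) (2 * (ρ - 1) / R) ρ := by
  simpa [sR] using ((((hasDerivAt_id ρ).sub_const 1).pow 2).add_const t).div_const R

theorem lapx_log_mul_comp_sR {g : ℝ → ℝ} (hg : ContDiffOn ℝ 2 g (Ioi 0)) {R t : ℝ} {x : E2}
    (hx : x ≠ 0) (hs : 0 < sR R ‖x‖ t) :
    lapx (fun y => Real.log ‖y‖ * g (sR R ‖y‖ t)) x =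
      Real.log ‖x‖ * (deriv (deriv g) (sR R ‖x‖ t) * (2 * (‖x‖ - 1) / R) ^ 2
          + deriv g (sR R ‖x‖ t) * (2 / R) + deriv g (sR R ‖x‖ t) * (2 * (‖x‖ - 1) / R) / ‖x‖)
        + 2 * (deriv g (sR R ‖x‖ t) * (2 * (‖x‖ - 1) / R)) / ‖x‖ := by
  have hcont : Continuous fun ρ => sR R ρ t := by unfold sR; fun_prop
  have hG : ∀ᶠ ρ in 𝓝 ‖x‖, HasDerivAt (fun ρ => g (sR R ρ t))
      (deriv g (sR R ρ t) * (2 * (ρ - 1) / R)) ρ := by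
    filter_upwards [hcont.continuousAt.eventually (lt_mem_nhds hs)] with ρ hρ
    exact (hg.hasDerivAt_deriv isOpen_Ioi hρ).comp ρ (hasDerivAt_sR R ρ t)
  have hlin : HasDerivAt (fun ρ : ℝ => 2 * (ρ - 1) / R) (2 / R) ‖x‖ := by
    simpa using (((hasDerivAt_id ‖x‖).sub_const 1).const_mul 2).div_const R
  have hG' := ((hg.hasDerivAt_deriv_deriv isOpen_Ioi hs).comp ‖x‖
    (hasDerivAt_sR R ‖x‖ t)).mul hlin
  rw [lapx_log_mul_comp_norm hx hG hG', Function.comp_apply]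
  ring

theorem deriv_comp_sR (g : ℝ → ℝ) (R ρ : ℝ) :
    deriv (fun t => g (sR R ρ t)) = fun t => R⁻¹ * deriv g (sR R ρ t) := by
  funext t
  have hg : (fun t => g (sR R ρ t)) = fun t => (fun u => g (u + (ρ - 1) ^ 2 / R)) (R⁻¹ * t) := by
    funext t; simp only [sR]; ring_nf
  rw [hg, deriv_comp_mul_left R⁻¹ (fun u => g (u + (ρ - 1) ^ 2 / R)) t, deriv_comp_add_const,
    smul_eq_mul]
  simp only [sR]; ring_nf

namespace etaOK

variable {η : ℝ → ℝ}

theorem mem_Icc_of_mem_Icc (hη : etaOK η) {σ : ℝ} (hσ : σ ∈ Icc (1 / 2 : ℝ) 1) : η σ ∈ Icc 0 1 := by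
  obtain ⟨-, hone, hanti, hzero⟩ := hη
  have hhalf : (1 / 2 : ℝ) ∈ Icc (1 / 2 : ℝ) 1 := by norm_num
  have h1 : (1 : ℝ) ∈ Icc (1 / 2 : ℝ) 1 := by norm_num
  exact ⟨hzero 1 le_rfl ▸ hanti hσ h1 hσ.2, hone (1 / 2) (by norm_num) ▸ hanti hhalf hσ hσ.1⟩

theorem etaStar_nonneg_s13 (hη : etaOK η) (σ : ℝ) : 0 ≤ etaStar η σ := by
  unfold etaStar
  split_ifs with hσ
  · exact le_rfl
  · rcases le_total σ 1 with hσ₁ | hσ₁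
    · exact (hη.mem_Icc_of_mem_Icc ⟨not_lt.mp hσ, hσ₁⟩).1
    · exact (hη.2.2.2 σ hσ₁).ge

theorem contDiffOn_rpow (hη : etaOK η) {m : ℝ} (hm : 2 ≤ m) :
    ContDiffOn ℝ 2 (fun σ => η σ ^ m) (Ioi 0) :=
  (Real.contDiff_rpow_const_of_le (n := 2) (by exact_mod_cast hm)).comp_contDiffOn
    (hη.1.mono Ioi_subset_Ici_self)

theorem exists_bound_deriv_rpow (hη : etaOK η) {m : ℝ} (hm : 2 ≤ m) :
    ∃ K > 0, ∀ σ ∈ Ioc (0 : ℝ) 1,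
      |deriv (fun σ => η σ ^ m) σ| ≤ K * etaStar η σ ^ (m - 2) ∧
        |deriv (deriv fun σ => η σ ^ m) σ| ≤ K * etaStar η σ ^ (m - 2) := by
  have hC : ContDiffOn ℝ 2 η (Ioi 0) := hη.1.mono Ioi_subset_Ici_self
  have hC₁ : ContDiffOn ℝ 1 (deriv η) (Ioi 0) :=
    hC.deriv_of_isOpen isOpen_Ioi (by norm_num : (1 : WithTop ℕ∞) + 1 ≤ 2)
  have hIcc : Icc (1 / 2 : ℝ) 1 ⊆ Ioi 0 := fun σ hσ => lt_of_lt_of_le (by norm_num) hσ.1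
  obtain ⟨M₁, hM₁⟩ := isCompact_Icc.exists_bound_of_continuousOn (hC₁.continuousOn.mono hIcc)
  obtain ⟨M₂, hM₂⟩ := isCompact_Icc.exists_bound_of_continuousOn
    ((hC₁.continuousOn_deriv_of_isOpen isOpen_Ioi le_rfl).mono hIcc)
  have hM₁₀ : 0 ≤ M₁ := (norm_nonneg _).trans (hM₁ 1 (by norm_num))
  have hM₂₀ : 0 ≤ M₂ := (norm_nonneg _).trans (hM₂ 1 (by norm_num))
  have hm₀ : 0 ≤ m := by linarith
  have hsum : 0 ≤ (m - 1) * M₁ ^ 2 := mul_nonneg (by linarith) (sq_nonneg _)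
  have hK₁ : m * M₁ ≤ m * (M₁ + M₂ + (m - 1) * M₁ ^ 2) + 1 := by
    nlinarith [mul_le_mul_of_nonneg_left (by linarith : M₁ ≤ M₁ + M₂ + (m - 1) * M₁ ^ 2) hm₀]
  have hK₂ : m * (M₂ + (m - 1) * M₁ ^ 2) ≤ m * (M₁ + M₂ + (m - 1) * M₁ ^ 2) + 1 := by
    nlinarith [mul_le_mul_of_nonneg_left (by linarith : M₂ + (m - 1) * M₁ ^ 2 ≤
      M₁ + M₂ + (m - 1) * M₁ ^ 2) hm₀]
  refine ⟨m * (M₁ + M₂ + (m - 1) * M₁ ^ 2) + 1, by positivity, fun σ hσ => ?_⟩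
  by_cases hhalf : σ < 1 / 2
  · have hconst : (fun σ => η σ ^ m) =ᶠ[𝓝 σ] fun _ => 1 := by
      filter_upwards [Ioo_mem_nhds hσ.1 hhalf] with y hy
      rw [hη.2.1 y ⟨hy.1.le, hy.2.le⟩, Real.one_rpow]
    rw [hconst.deriv_eq, hconst.deriv.deriv_eq]
    simp only [deriv_const', abs_zero]
    have hstar := Real.rpow_nonneg (hη.etaStar_nonneg_s13 σ) (m - 2)
    exact ⟨by positivity, by positivity⟩
  · have hσ' : σ ∈ Icc (1 / 2 : ℝ) 1 := ⟨not_lt.mp hhalf, hσ.2⟩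
    obtain ⟨h₁, h₂⟩ := abs_deriv_rpow_le (hη.mem_Icc_of_mem_Icc hσ') hm
      (by simpa using hM₁ σ hσ') (by simpa using hM₂ σ hσ')
    rw [deriv_rpow_const_of_contDiffOn hC isOpen_Ioi (by linarith) hσ.1,
      deriv_deriv_rpow_const_of_contDiffOn hC isOpen_Ioi hm hσ.1, etaStar, if_neg hhalf]
    have hpow := Real.rpow_nonneg (hη.mem_Icc_of_mem_Icc hσ').1 (m - 2)
    exact ⟨h₁.trans (mul_le_mul_of_nonneg_right hK₁ hpow),
      h₂.trans (mul_le_mul_of_nonneg_right hK₂ hpow)⟩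

end etaOK

theorem psiStar_rpow_one_div {η : ℝ → ℝ} (hη : etaOK η) {p : ℝ} (hp : 1 < p) (R : ℝ) (x : E2)
    (t : ℝ) : psiStar η p R x t ^ (1 / p) = etaStar η (sR R ‖x‖ t) ^ (2 * (p / (p - 1)) - 2) := by
  rw [psiStar, ← Real.rpow_mul (hη.etaStar_nonneg_s13 _)]
  congr 1
  have : p - 1 ≠ 0 := by linarith
  field_simp
  ring

theorem norm_neg_add_mul_sub_exp_mul_le {τ : ℝ} (hτ : |τ| ≤ 1) (ζ u v w : ℝ) :
    ‖-(u : ℂ) + τ * v - Complex.exp (Complex.I * ζ) * w‖ ≤ |u| + |v| + |w| := by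
  have hexp : ‖Complex.exp (Complex.I * ζ)‖ = 1 := by
    rw [mul_comm]; exact Complex.norm_exp_ofReal_mul_I ζ
  calc ‖-(u : ℂ) + τ * v - Complex.exp (Complex.I * ζ) * w‖
      ≤ ‖(u : ℂ)‖ + ‖(τ : ℂ)‖ * ‖(v : ℂ)‖ + ‖Complex.exp (Complex.I * ζ)‖ * ‖(w : ℂ)‖ := by
        refine (norm_sub_le _ _).trans ?_
        rw [norm_mul]
        gcongr
        exact (norm_add_le _ _).trans (by rw [norm_neg, norm_mul])
    _ ≤ |u| + |v| + |w| := by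
        simp only [Complex.norm_real, Real.norm_eq_abs, hexp, one_mul]
        gcongr
        exact mul_le_of_le_one_left (abs_nonneg v) hτ

theorem abs_log_mul_add_le {r R a b B : ℝ} (hr : 1 < r) (hR : 0 < R) (hrR : (r - 1) ^ 2 ≤ R)
    (ha : |a| ≤ B) (hb : |b| ≤ B) :
    |Real.log r * (b * (2 * (r - 1) / R) ^ 2 + a * (2 / R) + a * (2 * (r - 1) / R) / r)
        + 2 * (a * (2 * (r - 1) / R)) / r| ≤ 12 * B * Real.log r / R := by
  have hlog : 0 ≤ Real.log r := (Real.log_pos hr).le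
  have hB : 0 ≤ B := (abs_nonneg a).trans ha
  have hmul : ∀ {d c C : ℝ}, |d| ≤ B → 0 ≤ c → c ≤ C → |d * c| ≤ B * C := fun hd hc hcC => by
    rw [abs_mul, abs_of_nonneg hc]; exact mul_le_mul hd hcC hc hB
  set w := 2 * (r - 1) / R
  have hw : 0 ≤ w := div_nonneg (by linarith) hR.le
  have hw2 : w ^ 2 ≤ 4 / R := by
    rw [div_pow, div_le_div_iff₀ (by positivity) hR]; nlinarith
  -- `(r - 1) / r ≤ log r` turns the factor `1 / r` of the gradient term into `log r`
  have hwr : w / r ≤ 2 * Real.log r / R := by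
    have := Real.one_sub_inv_le_log_of_pos (by linarith : 0 < r)
    rw [div_le_iff₀ (by linarith), div_mul_eq_mul_div, div_le_div_iff_of_pos_right hR]
    nlinarith [mul_inv_cancel₀ (by linarith : r ≠ 0)]
  have hwr' : w / r ≤ 2 / R := by
    rw [div_le_iff₀ (by linarith), div_mul_eq_mul_div, div_le_div_iff_of_pos_right hR]
    linarith
  have hwr₀ : 0 ≤ w / r := div_nonneg hw (by linarith)
  have hX : |b * w ^ 2 + a * (2 / R) + a * w / r| ≤ B * (4 / R) + B * (2 / R) + B * (2 / R) := by
    rw [mul_div_assoc]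
    exact (abs_add_three _ _ _).trans (add_le_add_three (hmul hb (sq_nonneg w) hw2)
      (hmul ha (by positivity) le_rfl) (hmul ha hwr₀ hwr'))
  have hY : |2 * (a * w) / r| ≤ 2 * (B * (2 * Real.log r / R)) := by
    rw [mul_div_assoc, mul_div_assoc, abs_mul, abs_two]
    gcongr
    exact hmul ha hwr₀ hwr
  calc _ ≤ Real.log r * |b * w ^ 2 + a * (2 / R) + a * w / r| + |2 * (a * w) / r| := by
        rw [← abs_of_nonneg hlog, ← abs_mul, abs_of_nonneg hlog]; exact abs_add_le _ _
    _ ≤ Real.log r * (B * (4 / R) + B * (2 / R) + B * (2 / R))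
          + 2 * (B * (2 * Real.log r / R)) := by
        gcongr
    _ = 12 * B * Real.log r / R := by ring

theorem abs_mul_inv_mul_inv_add_abs_mul_inv_le {L R₀ R a b B : ℝ} (hL : 0 ≤ L) (hR₀ : 0 < R₀)
    (hR : R₀ ≤ R) (ha : |a| ≤ B) (hb : |b| ≤ B) :
    |L * (R⁻¹ * (R⁻¹ * b))| + |L * (R⁻¹ * a)| ≤ (1 + R₀⁻¹) * B * L * R⁻¹ := by
  have hRinv : 0 ≤ R⁻¹ := inv_nonneg.mpr (hR₀.trans_le hR).le
  have hRR₀ : R⁻¹ ≤ R₀⁻¹ := inv_anti₀ hR₀ hR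
  have hB : 0 ≤ B := (abs_nonneg a).trans ha
  simp only [abs_mul, abs_of_nonneg hL, abs_of_nonneg hRinv]
  calc L * (R⁻¹ * (R⁻¹ * |b|)) + L * (R⁻¹ * |a|) ≤ L * (R⁻¹ * (R₀⁻¹ * B)) + L * (R⁻¹ * B) := by
        gcongr
    _ = (1 + R₀⁻¹) * B * L * R⁻¹ := by ring

theorem statement13_general (p τ ζ R₀ : ℝ) (hp : 1 < p) (hτ : τ = 0 ∨ τ = 1) (hR₀ : 0 < R₀)
    (η : ℝ → ℝ) (hη : etaOK η) :
    ∃ C₅ > (0 : ℝ), ∀ R : ℝ, R₀ ≤ R → ∀ q ∈ Pset R,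
      (fun z : ℂ => ‖z‖)
        (-((lapx (fun x : E2 => Real.log ‖x‖ * psi η p R x q.2) q.1 : ℝ) : ℂ)
          + (τ : ℂ) *
            ((deriv (deriv (fun t : ℝ => Real.log ‖q.1‖ * psi η p R q.1 t)) q.2 : ℝ) : ℂ)
          - Complex.exp (Complex.I * (ζ : ℂ)) *
            ((deriv (fun t : ℝ => Real.log ‖q.1‖ * psi η p R q.1 t) q.2 : ℝ) : ℂ))
        ≤ C₅ * R⁻¹ * Real.log ‖q.1‖ * psiStar η p R q.1 q.2 ^ (1 / p) := by
  have hm : 2 ≤ 2 * (p / (p - 1)) := by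
    have : 1 ≤ p / (p - 1) := (one_le_div (by linarith)).mpr (by linarith)
    linarith
  have hτ₁ : |τ| ≤ 1 := by rcases hτ with rfl | rfl <;> norm_num
  obtain ⟨K, hK, hbound⟩ := hη.exists_bound_deriv_rpow hm
  refine ⟨(13 + R₀⁻¹) * K, by positivity, fun R hR ⟨x, t⟩ ⟨hΩ, ht, hxt⟩ => ?_⟩
  have hx : 1 < ‖x‖ := hΩ
  have hRpos : 0 < R := hR₀.trans_le hR
  have hs : sR R ‖x‖ t ∈ Ioc 0 1 := ⟨div_pos (by nlinarith) hRpos, (div_le_one hRpos).mpr hxt⟩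
  set g : ℝ → ℝ := fun σ => η σ ^ (2 * (p / (p - 1)))
  have hpsi : ∀ y s, psi η p R y s = g (sR R ‖y‖ s) := fun _ _ => rfl
  simp only [hpsi, deriv_const_mul_field', deriv_comp_sR]
  rw [lapx_log_mul_comp_sR (hη.contDiffOn_rpow hm) (norm_pos_iff.mp (zero_lt_one.trans hx)) hs.1,
    psiStar_rpow_one_div hη hp]
  refine (norm_neg_add_mul_sub_exp_mul_le hτ₁ ζ _ _ _).trans ?_
  set B := K * etaStar η (sR R ‖x‖ t) ^ (2 * (p / (p - 1)) - 2)
  obtain ⟨hg₁, hg₂⟩ : |deriv g (sR R ‖x‖ t)| ≤ B ∧ |deriv (deriv g) (sR R ‖x‖ t)| ≤ B :=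
    hbound _ hs
  have hspace := abs_log_mul_add_le hx hRpos (by linarith) hg₁ hg₂
  have htime := abs_mul_inv_mul_inv_add_abs_mul_inv_le (Real.log_pos hx).le hR₀ hR hg₁ hg₂
  calc _ ≤ 12 * B * Real.log ‖x‖ / R + (1 + R₀⁻¹) * B * Real.log ‖x‖ * R⁻¹ := by
        rw [add_assoc]; exact add_le_add hspace htime
    _ = _ := by ring

/-- With `Φ(x) = log|x|`: there is `C₅ > 0`, depending only on `η`, `p`, `τ` and `R₀`,
such that for every `R ≥ R₀` and `(x,t) ∈ P(R)`,
`|−Δ_x(Φψ_R) + τ ∂_t²(Φψ_R) − e^{iζ} ∂_t(Φψ_R)| ≤ C₅ R⁻¹ Φ(x) [ψ*_R(x,t)]^{1/p}`. -/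
theorem statement13 (p τ ζ R₀ : ℝ) (hp : 1 < p) (hτ : τ = 0 ∨ τ = 1)
    (hζ : ζ ∈ Set.Icc (-(π / 2)) (π / 2)) (hR₀ : 0 < R₀)
    (η : ℝ → ℝ) (hη : etaOK η) :
    ∃ C₅ > (0 : ℝ), ∀ R : ℝ, R₀ ≤ R → ∀ q ∈ Pset R,
      (fun z : ℂ => ‖z‖)
        (-((lapx (fun x : E2 => Real.log ‖x‖ * psi η p R x q.2) q.1 : ℝ) : ℂ)
          + (τ : ℂ) *
            ((deriv (deriv (fun t : ℝ => Real.log ‖q.1‖ * psi η p R q.1 t)) q.2 : ℝ) : ℂ)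
          - Complex.exp (Complex.I * (ζ : ℂ)) *
            ((deriv (fun t : ℝ => Real.log ‖q.1‖ * psi η p R q.1 t) q.2 : ℝ) : ℂ))
        ≤ C₅ * R⁻¹ * Real.log ‖q.1‖ * psiStar η p R q.1 q.2 ^ (1 / p) :=
  statement13_general p τ ζ R₀ hp hτ hR₀ η hη
end
end
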